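/- arXiv:2603.11719 — 2 statements merged into one kernel-verified Lean document; each statement's English description precedes it below -/
import Mathlib

section
/- In the bipartite SBM with edge split, suppose Assumption 1 holds with constant π₀, B = ρB₀ with B₀ having distinct rows, K₁' < K₁ and K₂' ≤ 2K₁K₂, and min{n₁,n₂}(1−w) → ∞. For partitions {Ĝ_{k₁}}_{k₁∈[K₁']} of [n₁] and {Ĥ_{k₂}}_{k₂∈[K₂']} of [n₂], define Î_{k₁k₂} = (Ĝ_{k₁}×Ĥ_{k₂}) ∩ 𝓔ᶜ, and for the true communities define I_{l₁l₂} = (G_{l₁}×H_{l₂}) ∩ 𝓔ᶜ. Then there is a constant c > 0 depending only on K₁, K₂, π₀ such that, with probability tending to 1 as (n₁,n₂) → ∞, simultaneously for every such pair of partitions there exist l₁ ≠ l₁' ∈ [K₁], k₁ ∈ [K₁'], l₂ ∈ [K₂], k₂ ∈ [K₂'] with: (i) |Î_{k₁k₂} ∩ I_{l₁l₂}| ≥ c·n₁n₂(1−w); (ii) |Î_{k₁k₂} ∩ I_{l₁'l₂}| ≥ c·n₁n₂(1−w); (iii) B₀_{l₁l₂} ≠ B₀_{l₁'l₂}. -/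
open MeasureTheory ProbabilityTheory Matrix Filter Finset
open scoped ENNReal Topology

namespace BCV

/-- Spectral (operator) norm of a real matrix. -/
noncomputable def specNorm {m p : ℕ} (M : Matrix (Fin m) (Fin p) ℝ) : ℝ :=
  ‖LinearMap.toContinuousLinearMap (Matrix.toEuclideanLin M)‖

/-- Frobenius norm of a real matrix. -/
noncomputable def frobNorm {m p : ℕ} (M : Matrix (Fin m) (Fin p) ℝ) : ℝ :=
  Real.sqrt (∑ i, ∑ j, (M i j) ^ 2)

/-- Maximum absolute entry of a matrix. -/
noncomputable def maxNorm {m p : ℕ} (M : Matrix (Fin m) (Fin p) ℝ) : ℝ :=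
  ⨆ i, ⨆ j, |M i j|

/-- A membership matrix: 0/1 entries, exactly one 1 per row, no all-zero column. -/
def IsMembershipMatrix {n K : ℕ} (Z : Matrix (Fin n) (Fin K) ℝ) : Prop :=
  (∀ i k, Z i k = 0 ∨ Z i k = 1) ∧ (∀ i, ∃! k, Z i k = 1) ∧ (∀ k, ∃ i, Z i k = 1)

/-- A family of mutually independent Bernoulli random variables (valued in {0,1} ⊆ ℝ)
with success probabilities `p i`. -/
def IndepBernoulliFamily {Ω : Type*} [MeasureSpace Ω] {ι : Type*}
    (X : ι → Ω → ℝ) (p : ι → ℝ) : Prop :=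
  (∀ i, Measurable (X i)) ∧ (∀ i ω, X i ω = 0 ∨ X i ω = 1) ∧
  (∀ i, ℙ {ω | X i ω = 1} = ENNReal.ofReal (p i)) ∧
  iIndepFun X ℙ

/-- A random 0/1 matrix with mutually independent Bernoulli entries of means `P i j`. -/
def BernoulliMatrix {Ω : Type*} [MeasureSpace Ω] {n₁ n₂ : ℕ}
    (A : Ω → Matrix (Fin n₁) (Fin n₂) ℝ) (P : Matrix (Fin n₁) (Fin n₂) ℝ) : Prop :=
  IndepBernoulliFamily (fun (q : Fin n₁ × Fin n₂) ω => A ω q.1 q.2) (fun q => P q.1 q.2)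

/-- Bipartite SBM bi-adjacency matrix `A` with mean `P` together with an independent
edge split `G` (i.i.d. Bernoulli(w) training indicators), all entries mutually independent. -/
def SBMSplit {Ω : Type*} [MeasureSpace Ω] {n₁ n₂ : ℕ}
    (A G : Ω → Matrix (Fin n₁) (Fin n₂) ℝ)
    (P : Matrix (Fin n₁) (Fin n₂) ℝ) (w : ℝ) : Prop :=
  IndepBernoulliFamily
    (Sum.elim (fun (q : Fin n₁ × Fin n₂) ω => A ω q.1 q.2)
              (fun (q : Fin n₁ × Fin n₂) ω => G ω q.1 q.2))
    (Sum.elim (fun q => P q.1 q.2) (fun _ => w))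

/-- `U S Vᵀ` is a rank-`k` truncated SVD of `M`: orthonormal columns, diagonal nonnegative
middle factor, and `U S Vᵀ` is a best Frobenius-norm approximation of `M` among matrices of
rank at most `k` (Eckart–Young characterization). -/
def IsTruncSVD {m p : ℕ} (k : ℕ) (M : Matrix (Fin m) (Fin p) ℝ)
    (U : Matrix (Fin m) (Fin k) ℝ) (S : Matrix (Fin k) (Fin k) ℝ)
    (V : Matrix (Fin p) (Fin k) ℝ) : Prop :=
  U.transpose * U = 1 ∧ V.transpose * V = 1 ∧
  (∀ i j, i ≠ j → S i j = 0) ∧ (∀ i, 0 ≤ S i i) ∧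
  ∀ N : Matrix (Fin m) (Fin p) ℝ, N.rank ≤ k →
    frobNorm (M - U * S * V.transpose) ≤ frobNorm (M - N)

/-- k-means objective of the labeling `g` with centroids `x` on the rows of `U`. -/
noncomputable def kmeansObj {n d K : ℕ} (U : Matrix (Fin n) (Fin d) ℝ)
    (g : Fin n → Fin K) (x : Fin K → Fin d → ℝ) : ℝ :=
  ∑ i, ∑ j, (U i j - x (g i) j) ^ 2

/-- `g` is an `M`-approximate k-means labeling of the rows of `U`: for some choice of
centroids its objective is within a factor `M` of the global optimum over all labelings
and centroids. -/
def IsApproxKMeans (M : ℝ) {n d K : ℕ} (U : Matrix (Fin n) (Fin d) ℝ)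
    (g : Fin n → Fin K) : Prop :=
  ∃ x : Fin K → Fin d → ℝ, ∀ (g' : Fin n → Fin K) (x' : Fin K → Fin d → ℝ),
    kmeansObj U g x ≤ M * kmeansObj U g' x'

/-- Estimated block probability `B̂_{k₁k₂}` from the training entries. -/
noncomputable def Bhat {n₁ n₂ K₁' K₂' : ℕ} (A G : Matrix (Fin n₁) (Fin n₂) ℝ)
    (c1 : Fin n₁ → Fin K₁') (c2 : Fin n₂ → Fin K₂') (k₁ : Fin K₁') (k₂ : Fin K₂') : ℝ :=
  (∑ i, ∑ j, if G i j = 1 ∧ c1 i = k₁ ∧ c2 j = k₂ then A i j else 0) /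
  (∑ i, ∑ j, if G i j = 1 ∧ c1 i = k₁ ∧ c2 j = k₂ then (1 : ℝ) else 0)

/-- Fitted test loss `ℓ_{K₁',K₂'}(A, 𝓔ᶜ) = ∑_{(i,j) ∈ 𝓔ᶜ} (A_{ij} − P̂_{ij})²`. -/
noncomputable def fittedLoss {n₁ n₂ K₁' K₂' : ℕ} (A G : Matrix (Fin n₁) (Fin n₂) ℝ)
    (c1 : Fin n₁ → Fin K₁') (c2 : Fin n₂ → Fin K₂') : ℝ :=
  ∑ i, ∑ j, if G i j = 1 then 0 else (A i j - Bhat A G c1 c2 (c1 i) (c2 j)) ^ 2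

/-- Oracle test loss `ℓ₀(A, 𝓔ᶜ) = ∑_{(i,j) ∈ 𝓔ᶜ} (A_{ij} − P_{ij})²`. -/
noncomputable def oracleLoss {n₁ n₂ : ℕ} (A G P : Matrix (Fin n₁) (Fin n₂) ℝ) : ℝ :=
  ∑ i, ∑ j, if G i j = 1 then 0 else (A i j - P i j) ^ 2

/-- Cardinality `|𝓔ᶜ|` of the test set. -/
noncomputable def testCard {n₁ n₂ : ℕ} (G : Matrix (Fin n₁) (Fin n₂) ℝ) : ℝ :=
  ∑ i, ∑ j, if G i j = 1 then 0 else (1 : ℝ)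

/-- Penalized loss `L_{K₁',K₂'}(A,𝓔ᶜ) = |𝓔ᶜ|⁻¹ ℓ_{K₁',K₂'}(A,𝓔ᶜ) + K₁'K₂'·λ`. -/
noncomputable def penLoss {n₁ n₂ : ℕ} {K₁' K₂' : ℕ} (A G : Matrix (Fin n₁) (Fin n₂) ℝ)
    (c1 : Fin n₁ → Fin K₁') (c2 : Fin n₂ → Fin K₂') (lam : ℝ) : ℝ :=
  fittedLoss A G c1 c2 / testCard G + (K₁' : ℝ) * (K₂' : ℝ) * lam

/-- The labelings `c1, c2` are obtained by the BCV spectral pipeline at candidate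
`(K₁', K₂')`: for each sample point, `c1` (resp. `c2`) is an `M`-approximate k-means
labeling of the rows of the matrix of top-`min{K₁',K₂'}` left (resp. right) singular
vectors of `Y/w`. -/
def IsBCVLabeling {Ω : Type*} {n₁ n₂ : ℕ} (M : ℝ)
    (A G : Ω → Matrix (Fin n₁) (Fin n₂) ℝ) (w : ℝ) {K₁' K₂' : ℕ}
    (c1 : Ω → Fin n₁ → Fin K₁') (c2 : Ω → Fin n₂ → Fin K₂') : Prop :=
  ∀ ω, ∃ (U : Matrix (Fin n₁) (Fin (min K₁' K₂')) ℝ)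
      (S : Matrix (Fin (min K₁' K₂')) (Fin (min K₁' K₂')) ℝ)
      (V : Matrix (Fin n₂) (Fin (min K₁' K₂')) ℝ),
    IsTruncSVD (min K₁' K₂') (Matrix.of fun i j => A ω i j * G ω i j / w) U S V ∧
    IsApproxKMeans M U (c1 ω) ∧ IsApproxKMeans M V (c2 ω)

/-- Size of the `k`-th community of a label vector. -/
def commCard {n K : ℕ} (c : Fin n → Fin K) (k : Fin K) : ℕ :=
  (Finset.univ.filter fun i => c i = k).card

/-- `B̄ = N₁^{1/2} B N₂^{1/2}` built from the community sizes of the two label vectors. -/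
noncomputable def BbarOf {n₁ n₂ K₁ K₂ : ℕ} (c₁ : Fin n₁ → Fin K₁) (c₂ : Fin n₂ → Fin K₂)
    (B : Matrix (Fin K₁) (Fin K₂) ℝ) : Matrix (Fin K₁) (Fin K₂) ℝ :=
  Matrix.of fun k l => Real.sqrt (commCard c₁ k) * B k l * Real.sqrt (commCard c₂ l)

/-- Assumption 2 (incoherence): some reduced SVD `U S Vᵀ` of `B̄` has right singular
vector matrix `V` with every 2×2 principal submatrix of `V Vᵀ − I` of spectral norm
at most `1 − β`. -/
def Incoherent {K₁ K₂ : ℕ} (Bbar : Matrix (Fin K₁) (Fin K₂) ℝ) (β : ℝ) : Prop :=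
  ∃ (U : Matrix (Fin K₁) (Fin (min K₁ K₂)) ℝ)
    (S : Matrix (Fin (min K₁ K₂)) (Fin (min K₁ K₂)) ℝ)
    (V : Matrix (Fin K₂) (Fin (min K₁ K₂)) ℝ),
    U.transpose * U = 1 ∧ V.transpose * V = 1 ∧
    (∀ i j, i ≠ j → S i j = 0) ∧ (∀ i, 0 < S i i) ∧
    Bbar = U * S * V.transpose ∧
    ∀ e : Fin 2 → Fin K₂, Function.Injective e →
      specNorm (Matrix.of fun a b =>
        (V * V.transpose - (1 : Matrix (Fin K₂) (Fin K₂) ℝ)) (e a) (e b)) ≤ 1 - β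

/-- Number of nodes in true community `k` misclassified by `chat` relative to the
permutation `π`. -/
def misCount {n K : ℕ} (ctrue chat : Fin n → Fin K) (π : Equiv.Perm (Fin K)) (k : Fin K) : ℕ :=
  (Finset.univ.filter fun i => ctrue i = k ∧ chat i ≠ π k).card

/-- Number of test pairs in `(Ĝ_{k₁} × Ĥ_{k₂}) ∩ (G_{l₁} × H_{l₂}) ∩ 𝓔ᶜ`. -/
noncomputable def overlapCount {n₁ n₂ K₁ K₂ K₁' K₂' : ℕ}
    (G : Matrix (Fin n₁) (Fin n₂) ℝ)
    (c₁ : Fin n₁ → Fin K₁) (c₂ : Fin n₂ → Fin K₂)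
    (g : Fin n₁ → Fin K₁') (h : Fin n₂ → Fin K₂')
    (k₁ : Fin K₁') (k₂ : Fin K₂') (l₁ : Fin K₁) (l₂ : Fin K₂) : ℝ :=
  ∑ i, ∑ j, if G i j ≠ 1 ∧ g i = k₁ ∧ h j = k₂ ∧ c₁ i = l₁ ∧ c₂ j = l₂ then (1 : ℝ) else 0


lemma mgf_bernoulli {Ω : Type*} [MeasureSpace Ω] [IsProbabilityMeasure (ℙ : Measure Ω)]
    {X : Ω → ℝ} (hX : Measurable X) (h01 : ∀ ω, X ω = 0 ∨ X ω = 1) {p : ℝ}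
    (hp : ℙ {ω | X ω = 1} = ENNReal.ofReal p) (hp0 : 0 ≤ p) (t : ℝ) :
    mgf X ℙ t = 1 + p * (Real.exp t - 1) := by
  have hA : MeasurableSet {ω | X ω = 1} := hX (measurableSet_singleton 1)
  have hPA : (ℙ {ω | X ω = 1}).toReal = p := by rw [hp, ENNReal.toReal_ofReal hp0]
  have hPAc : (ℙ {ω | X ω = 1}ᶜ).toReal = 1 - p := by
    rw [measure_compl hA (measure_ne_top _ _), measure_univ,
      ENNReal.toReal_sub_of_le (hp ▸ prob_le_one (μ := (ℙ : Measure Ω)) (s := {ω | X ω = 1})) (by simp), hPA, ENNReal.toReal_one]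
  have hfun : (fun ω => Real.exp (t * X ω)) =
      (fun ω => {ω | X ω = 1}.indicator (fun _ => Real.exp t) ω +
        ({ω | X ω = 1}ᶜ).indicator (fun _ => (1 : ℝ)) ω) := by
    funext ω
    rcases h01 ω with h | h
    · have hω : ω ∉ {ω | X ω = 1} := by simp [Set.mem_setOf_eq, h]
      simp [h, Set.indicator_of_notMem hω, Set.indicator_of_mem (Set.mem_compl hω)]
    · have hω : ω ∈ {ω | X ω = 1} := h
      simp [h, Set.indicator_of_mem hω, Set.indicator_of_notMem (by simpa using hω :
        ω ∉ {ω | X ω = 1}ᶜ)]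
  rw [mgf, hfun, integral_add ((integrable_const _).indicator hA) ((integrable_const _).indicator hA.compl)]
  rw [integral_indicator_const _ hA, integral_indicator_const _ hA.compl]
  simp only [smul_eq_mul, measureReal_def, hPA, hPAc]
  ring


lemma bernoulli_lower_tail {Ω : Type*} [MeasureSpace Ω] [IsProbabilityMeasure (ℙ : Measure Ω)]
    {ι : Type*} (X : ι → Ω → ℝ) (p : ℝ) (hp0 : 0 ≤ p) (hp1 : p ≤ 1)
    (hmeas : ∀ i, Measurable (X i)) (h01 : ∀ i ω, X i ω = 0 ∨ X i ω = 1)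
    (hp : ∀ i, ℙ {ω | X i ω = 1} = ENNReal.ofReal p)
    (hind : iIndepFun X ℙ) (s : Finset ι) :
    ℙ {ω | (∑ i ∈ s, X i ω) ≤ (s.card : ℝ) * p / 2} ≤
      ENNReal.ofReal (Real.exp (-((s.card : ℝ) * p) / 8)) := by
  classical
  set t : ℝ := -Real.log 2 with ht_def
  have ht : t ≤ 0 := neg_nonpos.mpr (Real.log_nonneg one_le_two)
  set N : ℝ := (s.card : ℝ) with hN_def
  have hN0 : 0 ≤ N := Nat.cast_nonneg _
  have hYmeas : Measurable (∑ i ∈ s, X i) := by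
    have h : (∑ i ∈ s, X i) = fun a => ∑ i ∈ s, X i a := funext fun a => Finset.sum_apply a s X
    rw [h]; exact Finset.measurable_sum s fun i _ => hmeas i
  have hYnonneg : ∀ ω, 0 ≤ (∑ i ∈ s, X i) ω := by
    intro ω
    rw [Finset.sum_apply]
    exact Finset.sum_nonneg fun i _ => by rcases h01 i ω with h | h <;> simp [h]
  have h_int : Integrable (fun ω => Real.exp (t * (∑ i ∈ s, X i) ω)) ℙ := by
    refine Integrable.mono' (integrable_const 1)
      ((hYmeas.const_mul t).exp.aestronglyMeasurable) (ae_of_all _ fun ω => ?_)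
    rw [Real.norm_eq_abs, abs_of_pos (Real.exp_pos _)]
    exact Real.exp_le_one_iff.mpr (mul_nonpos_of_nonpos_of_nonneg ht (hYnonneg ω))
  have hcher := measure_le_le_exp_mul_mgf (μ := (ℙ : Measure Ω)) (X := ∑ i ∈ s, X i)
    (N * p / 2) ht h_int
  have hmgf : mgf (∑ i ∈ s, X i) ℙ t = (1 + p * (Real.exp t - 1)) ^ s.card := by
    rw [hind.mgf_sum hmeas s]
    rw [Finset.prod_congr rfl fun i _ => mgf_bernoulli (hmeas i) (h01 i) (hp i) hp0 t]
    rw [Finset.prod_const]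
  have hexp_t : Real.exp t = 1 / 2 := by
    rw [ht_def, Real.exp_neg, Real.exp_log two_pos]
    norm_num
  have hbound : Real.exp (-t * (N * p / 2)) * mgf (∑ i ∈ s, X i) ℙ t ≤
      Real.exp (-(N * p) / 8) := by
    rw [hmgf, hexp_t]
    have h1 : (1 : ℝ) + p * (1 / 2 - 1) = 1 - p / 2 := by ring
    rw [h1]
    have h2 : (1 - p / 2 : ℝ) ≤ Real.exp (-(p / 2)) := by
      have := Real.add_one_le_exp (-(p / 2)); linarith
    have h3 : (1 - p / 2 : ℝ) ^ s.card ≤ Real.exp (-(p / 2)) ^ s.card :=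
      pow_le_pow_left₀ (by linarith) h2 _
    have h4 : Real.exp (-(p / 2)) ^ s.card = Real.exp (N * -(p / 2)) := by
      rw [Real.exp_nat_mul]
    calc Real.exp (-t * (N * p / 2)) * (1 - p / 2) ^ s.card
        ≤ Real.exp (-t * (N * p / 2)) * Real.exp (N * -(p / 2)) := by
          have := h4 ▸ h3
          exact mul_le_mul_of_nonneg_left this (Real.exp_pos _).le
      _ = Real.exp (-t * (N * p / 2) + N * -(p / 2)) := (Real.exp_add _ _).symm
      _ ≤ Real.exp (-(N * p) / 8) := by
          apply Real.exp_le_exp.mpr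
          have hlog : Real.log 2 < 0.6931471808 := Real.log_two_lt_d9
          have hNp : 0 ≤ N * p := mul_nonneg hN0 hp0
          rw [ht_def]
          nlinarith [hNp, hlog, Real.log_nonneg (one_le_two (α := ℝ))]
  have hfin : ℙ {ω | (∑ i ∈ s, X i) ω ≤ N * p / 2} ≤
      ENNReal.ofReal (Real.exp (-(N * p) / 8)) := by
    rw [← ENNReal.ofReal_toReal (measure_ne_top ℙ _)]
    exact ENNReal.ofReal_le_ofReal (hcher.trans hbound)
  have hset : {ω | (∑ i ∈ s, X i ω) ≤ N * p / 2} = {ω | (∑ i ∈ s, X i) ω ≤ N * p / 2} := by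
    ext ω; simp [Finset.sum_apply]
  rw [hset]
  exact hfin


lemma good_event_bound {Ω : Type*} [MeasureSpace Ω] [IsProbabilityMeasure (ℙ : Measure Ω)]
    {n₁ n₂ : ℕ} (G : Ω → Matrix (Fin n₁) (Fin n₂) ℝ) {w : ℝ} (hw0 : 0 ≤ w) (hw1 : w < 1)
    (hB : BernoulliMatrix G (Matrix.of fun _ _ => w)) (α : ℝ) :
    1 - ((2 : ℝ≥0∞) ^ (n₁ + n₂)) *
        ENNReal.ofReal (Real.exp (-(α * n₁ * n₂ * (1 - w)) / 8)) ≤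
    ℙ {ω | ∀ (U : Finset (Fin n₁)) (V : Finset (Fin n₂)),
        α * (n₁ : ℝ) * (n₂ : ℝ) ≤ (U.card : ℝ) * (V.card : ℝ) →
        (U.card : ℝ) * (V.card : ℝ) * (1 - w) / 2 ≤
          ∑ i ∈ U, ∑ j ∈ V, (if G ω i j = 1 then (0:ℝ) else 1)} := by
  classical
  set p : ℝ := 1 - w with hp_def
  have hp0 : 0 ≤ p := by linarith
  have hp1 : p ≤ 1 := by linarith
  set f : ℝ → ℝ := fun y => if y = 1 then 0 else 1 with hf_def
  have hf : Measurable f := Measurable.ite (measurableSet_eq) measurable_const measurable_const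
  set X : Fin n₁ × Fin n₂ → Ω → ℝ := fun q => f ∘ fun ω => G ω q.1 q.2 with hX_def
  obtain ⟨hGmeas, hG01, hGp, hGind⟩ := hB
  have hXmeas : ∀ q, Measurable (X q) := fun q => hf.comp (hGmeas q)
  have hX01 : ∀ q ω, X q ω = 0 ∨ X q ω = 1 := fun q ω => by
    by_cases h : G ω q.1 q.2 = 1 <;> simp [hX_def, hf_def, h]
  have hXp : ∀ q, ℙ {ω | X q ω = 1} = ENNReal.ofReal p := by
    intro q
    have hset : {ω | X q ω = 1} = {ω | G ω q.1 q.2 = 1}ᶜ := by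
      ext ω; by_cases h : G ω q.1 q.2 = 1 <;> simp [hX_def, hf_def, h]
    have hms : MeasurableSet {ω | G ω q.1 q.2 = 1} := (hGmeas q) (measurableSet_singleton 1)
    rw [hset, measure_compl hms (measure_ne_top _ _), measure_univ, hGp q]
    rw [hp_def, ENNReal.ofReal_sub 1 (by exact hw0), ENNReal.ofReal_one]
    rfl
  have hXind : iIndepFun X ℙ :=
    hGind.comp (fun _ => f) (fun _ => hf)
  set S : Set Ω := {ω | ∀ (U : Finset (Fin n₁)) (V : Finset (Fin n₂)),
        α * (n₁ : ℝ) * (n₂ : ℝ) ≤ (U.card : ℝ) * (V.card : ℝ) →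
        (U.card : ℝ) * (V.card : ℝ) * (1 - w) / 2 ≤
          ∑ i ∈ U, ∑ j ∈ V, (if G ω i j = 1 then (0:ℝ) else 1)} with hS_def
  have hSummeas : ∀ (U : Finset (Fin n₁)) (V : Finset (Fin n₂)),
      Measurable (fun ω => ∑ i ∈ U, ∑ j ∈ V, (if G ω i j = 1 then (0:ℝ) else 1)) := by
    intro U V
    refine Finset.measurable_sum _ fun i _ => Finset.measurable_sum _ fun j _ => ?_
    exact Measurable.ite ((hGmeas (i, j)) (measurableSet_singleton 1))
      measurable_const measurable_const
  have hSmeas : MeasurableSet S := by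
    rw [hS_def]
    have : {ω : Ω | ∀ (U : Finset (Fin n₁)) (V : Finset (Fin n₂)),
        α * (n₁ : ℝ) * (n₂ : ℝ) ≤ (U.card : ℝ) * (V.card : ℝ) →
        (U.card : ℝ) * (V.card : ℝ) * (1 - w) / 2 ≤
          ∑ i ∈ U, ∑ j ∈ V, (if G ω i j = 1 then (0:ℝ) else 1)} =
        ⋂ (U : Finset (Fin n₁)) (V : Finset (Fin n₂)),
          {ω : Ω | α * (n₁ : ℝ) * (n₂ : ℝ) ≤ (U.card : ℝ) * (V.card : ℝ) →
            (U.card : ℝ) * (V.card : ℝ) * (1 - w) / 2 ≤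
              ∑ i ∈ U, ∑ j ∈ V, (if G ω i j = 1 then (0:ℝ) else 1)} := by
      ext ω; simp [Set.mem_iInter]
    rw [this]
    refine MeasurableSet.iInter fun U => MeasurableSet.iInter fun V => ?_
    by_cases hc : α * (n₁ : ℝ) * (n₂ : ℝ) ≤ (U.card : ℝ) * (V.card : ℝ)
    · simp only [hc, forall_true_left]
      exact measurableSet_le measurable_const (hSummeas U V)
    · simp only [hc]
      simp [hc]
  set T : Finset ((Finset (Fin n₁)) × (Finset (Fin n₂))) :=
    Finset.univ.filter fun UV => α * (n₁ : ℝ) * (n₂ : ℝ) ≤ (UV.1.card : ℝ) * (UV.2.card : ℝ)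
    with hT_def
  set bad : (Finset (Fin n₁)) × (Finset (Fin n₂)) → Set Ω := fun UV =>
    {ω | (∑ q ∈ UV.1 ×ˢ UV.2, X q ω) ≤ ((UV.1 ×ˢ UV.2).card : ℝ) * p / 2} with hbad_def
  have hsub : Sᶜ ⊆ ⋃ UV ∈ T, bad UV := by
    intro ω hω
    simp only [hS_def, Set.mem_compl_iff, Set.mem_setOf_eq, not_forall, Classical.not_imp,
      not_le] at hω
    obtain ⟨U, V, hcond, hlt⟩ := hω
    have hmem : (U, V) ∈ T := Finset.mem_filter.mpr ⟨Finset.mem_univ _, hcond⟩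
    have hω' : ω ∈ bad (U, V) := by
      simp only [hbad_def, Set.mem_setOf_eq]
      rw [Finset.sum_product]
      have hcard : (((U ×ˢ V).card : ℝ)) = (U.card : ℝ) * (V.card : ℝ) := by
        rw [Finset.card_product]; push_cast; ring
      have hXeq : ∀ i ∈ U, ∀ j ∈ V, X (i, j) ω = (if G ω i j = 1 then (0:ℝ) else 1) :=
        fun i _ j _ => rfl
      rw [hcard]
      calc (∑ i ∈ U, ∑ j ∈ V, X (i, j) ω)
          = ∑ i ∈ U, ∑ j ∈ V, (if G ω i j = 1 then (0:ℝ) else 1) :=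
            Finset.sum_congr rfl fun i hi => Finset.sum_congr rfl fun j hj => hXeq i hi j hj
        _ ≤ (U.card : ℝ) * (V.card : ℝ) * p / 2 := by rw [hp_def]; exact hlt.le
    exact Set.mem_biUnion hmem hω'
  have hbad_bound : ∀ UV ∈ T, ℙ (bad UV) ≤
      ENNReal.ofReal (Real.exp (-(α * n₁ * n₂ * (1 - w)) / 8)) := by
    intro UV hUV
    have h1 := bernoulli_lower_tail X p hp0 hp1 hXmeas hX01 hXp hXind (UV.1 ×ˢ UV.2)
    refine le_trans h1 (ENNReal.ofReal_le_ofReal (Real.exp_le_exp.mpr ?_))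
    have hc : α * (n₁ : ℝ) * (n₂ : ℝ) ≤ (UV.1.card : ℝ) * (UV.2.card : ℝ) :=
      (Finset.mem_filter.mp hUV).2
    have hcard : (((UV.1 ×ˢ UV.2).card : ℝ)) = (UV.1.card : ℝ) * (UV.2.card : ℝ) := by
      rw [Finset.card_product]; push_cast; ring
    rw [hcard, hp_def]
    have h2 : α * (n₁ : ℝ) * (n₂ : ℝ) * (1 - w) ≤ (UV.1.card : ℝ) * (UV.2.card : ℝ) * (1 - w) :=
      mul_le_mul_of_nonneg_right hc (by linarith)
    linarith
  have hPSc : ℙ Sᶜ ≤ ((2 : ℝ≥0∞) ^ (n₁ + n₂)) *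
      ENNReal.ofReal (Real.exp (-(α * n₁ * n₂ * (1 - w)) / 8)) := by
    refine le_trans (measure_mono hsub) (le_trans (measure_biUnion_finset_le T bad) ?_)
    calc (∑ UV ∈ T, ℙ (bad UV))
        ≤ ∑ _UV ∈ T, ENNReal.ofReal (Real.exp (-(α * n₁ * n₂ * (1 - w)) / 8)) :=
          Finset.sum_le_sum hbad_bound
      _ = (T.card : ℝ≥0∞) * ENNReal.ofReal (Real.exp (-(α * n₁ * n₂ * (1 - w)) / 8)) := by
          rw [Finset.sum_const, nsmul_eq_mul]
      _ ≤ ((2 : ℝ≥0∞) ^ (n₁ + n₂)) *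
          ENNReal.ofReal (Real.exp (-(α * n₁ * n₂ * (1 - w)) / 8)) := by
          refine mul_le_mul_left ?_ _
          have hcardT : T.card ≤ 2 ^ (n₁ + n₂) := by
            calc T.card ≤ (Finset.univ : Finset ((Finset (Fin n₁)) × (Finset (Fin n₂)))).card :=
                  Finset.card_filter_le _ _
              _ = 2 ^ (n₁ + n₂) := by
                  rw [Finset.card_univ, Fintype.card_prod, Fintype.card_finset,
                    Fintype.card_finset, Fintype.card_fin, Fintype.card_fin, pow_add]
          calc (T.card : ℝ≥0∞) ≤ ((2 ^ (n₁ + n₂) : ℕ) : ℝ≥0∞) := Nat.cast_le.mpr hcardT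
            _ = (2 : ℝ≥0∞) ^ (n₁ + n₂) := by push_cast; rfl
  calc 1 - ((2 : ℝ≥0∞) ^ (n₁ + n₂)) *
        ENNReal.ofReal (Real.exp (-(α * n₁ * n₂ * (1 - w)) / 8))
      ≤ 1 - ℙ Sᶜ := tsub_le_tsub_left hPSc _
    _ = ℙ S := by
        rw [prob_compl_eq_one_sub hSmeas, ENNReal.sub_sub_cancel ENNReal.one_ne_top prob_le_one]

lemma pigeonhole_card {n K' : ℕ} (hK' : 0 < K') (T : Finset (Fin n)) (g : Fin n → Fin K') :
    ∃ k, (T.card : ℝ) / (K' : ℝ) ≤ ((T.filter fun i => g i = k).card : ℝ) := by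
  classical
  by_contra hcon
  push_neg at hcon
  have hsum : ∑ k : Fin K', ((T.filter fun i => g i = k).card : ℝ) = (T.card : ℝ) := by
    rw [← Nat.cast_sum]
    norm_cast
    exact (Finset.card_eq_sum_card_fiberwise fun i _ => Finset.mem_univ (g i)).symm
  have hne : (Finset.univ : Finset (Fin K')).Nonempty := ⟨⟨0, hK'⟩, Finset.mem_univ _⟩
  have hlt := Finset.sum_lt_sum_of_nonempty hne fun k _ => hcon k
  rw [hsum, Finset.sum_const, Finset.card_univ, Fintype.card_fin, nsmul_eq_mul,
    mul_div_cancel₀ _ (by exact_mod_cast hK'.ne' : ((K' : ℝ)) ≠ 0)] at hlt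
  exact lt_irrefl _ hlt

lemma overlap_eq_sum {n₁ n₂ K₁ K₂ K₁' K₂' : ℕ} (G : Matrix (Fin n₁) (Fin n₂) ℝ)
    (c₁ : Fin n₁ → Fin K₁) (c₂ : Fin n₂ → Fin K₂) (g : Fin n₁ → Fin K₁') (h : Fin n₂ → Fin K₂')
    (k₁ : Fin K₁') (k₂ : Fin K₂') (l₁ : Fin K₁) (l₂ : Fin K₂) :
    overlapCount G c₁ c₂ g h k₁ k₂ l₁ l₂ =
      ∑ i ∈ (Finset.univ.filter fun i => c₁ i = l₁).filter (fun i => g i = k₁),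
        ∑ j ∈ (Finset.univ.filter fun j => c₂ j = l₂).filter (fun j => h j = k₂),
          (if G i j = 1 then (0:ℝ) else 1) := by
  classical
  have key : ∀ i j, (if G i j ≠ 1 ∧ g i = k₁ ∧ h j = k₂ ∧ c₁ i = l₁ ∧ c₂ j = l₂
        then (1:ℝ) else 0) =
      (if c₁ i = l₁ ∧ g i = k₁ then
        (if c₂ j = l₂ ∧ h j = k₂ then (if G i j = 1 then (0:ℝ) else 1) else 0) else 0) := by
    intro i j
    split_ifs <;> tauto
  unfold overlapCount
  calc (∑ i, ∑ j, if G i j ≠ 1 ∧ g i = k₁ ∧ h j = k₂ ∧ c₁ i = l₁ ∧ c₂ j = l₂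
          then (1:ℝ) else 0)
      = ∑ i, ∑ j, (if c₁ i = l₁ ∧ g i = k₁ then
          (if c₂ j = l₂ ∧ h j = k₂ then (if G i j = 1 then (0:ℝ) else 1) else 0) else 0) :=
        Finset.sum_congr rfl fun i _ => Finset.sum_congr rfl fun j _ => key i j
    _ = ∑ i, (if c₁ i = l₁ ∧ g i = k₁ then
          (∑ j, (if c₂ j = l₂ ∧ h j = k₂ then (if G i j = 1 then (0:ℝ) else 1) else 0))
          else 0) := by
        refine Finset.sum_congr rfl fun i _ => ?_
        by_cases hi : c₁ i = l₁ ∧ g i = k₁ <;> simp [hi]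
    _ = ∑ i ∈ Finset.univ.filter (fun i => c₁ i = l₁ ∧ g i = k₁),
          ∑ j, (if c₂ j = l₂ ∧ h j = k₂ then (if G i j = 1 then (0:ℝ) else 1) else 0) :=
        (Finset.sum_filter _ _).symm
    _ = ∑ i ∈ Finset.univ.filter (fun i => c₁ i = l₁ ∧ g i = k₁),
          ∑ j ∈ Finset.univ.filter (fun j => c₂ j = l₂ ∧ h j = k₂),
            (if G i j = 1 then (0:ℝ) else 1) :=
        Finset.sum_congr rfl fun i _ => (Finset.sum_filter _ _).symm
    _ = _ := by rw [Finset.filter_filter, Finset.filter_filter]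

set_option maxHeartbeats 2000000 in
/-- uniform lower bound on test-set overlaps for underfitting
partitions on side 1 (Lemma A.7). -/
theorem stmt_10 (K₁ K₂ : ℕ) (hK₁pos : 0 < K₁) (hK₂pos : 0 < K₂)
    (π₀ : ℝ) (hπ₀pos : 0 < π₀) (hπ₀le : π₀ ≤ ((max K₁ K₂ : ℕ) : ℝ)⁻¹) :
    ∃ c > (0 : ℝ),
    ∀ (K₁' K₂' : ℕ), 0 < K₁' → K₁' < K₁ → 0 < K₂' → K₂' ≤ 2 * K₁ * K₂ →
    ∀ (B₀ : Matrix (Fin K₁) (Fin K₂) ℝ),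
      (∀ k k', k ≠ k' → ∃ l, B₀ k l ≠ B₀ k' l) →
    ∀ (n₁ n₂ : ℕ → ℕ), Tendsto n₁ atTop atTop → Tendsto n₂ atTop atTop →
    ∀ (w : ℕ → ℝ), (∀ m, 0 < w m ∧ w m < 1) →
      Tendsto (fun m => ((min (n₁ m) (n₂ m) : ℕ) : ℝ) * (1 - w m)) atTop atTop →
    ∀ (c₁ : ∀ m, Fin (n₁ m) → Fin K₁) (c₂ : ∀ m, Fin (n₂ m) → Fin K₂),
      (∀ m k, π₀ * (n₁ m : ℝ) ≤ (commCard (c₁ m) k : ℝ)) →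
      (∀ m l, π₀ * (n₂ m : ℝ) ≤ (commCard (c₂ m) l : ℝ)) →
    ∀ (Ω : ℕ → Type) [∀ m, MeasureSpace (Ω m)]
      [∀ m, IsProbabilityMeasure (ℙ : Measure (Ω m))]
      (G : ∀ m, Ω m → Matrix (Fin (n₁ m)) (Fin (n₂ m)) ℝ),
      (∀ m, BernoulliMatrix (G m) (Matrix.of fun _ _ => w m)) →
      Tendsto (fun m => ℙ {ω |
        ∀ (g : Fin (n₁ m) → Fin K₁') (h : Fin (n₂ m) → Fin K₂'),
        ∃ (l₁ l₁' : Fin K₁) (k₁ : Fin K₁') (l₂ : Fin K₂) (k₂ : Fin K₂'),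
          l₁ ≠ l₁' ∧
          c * (n₁ m : ℝ) * (n₂ m : ℝ) * (1 - w m) ≤
            overlapCount (G m ω) (c₁ m) (c₂ m) g h k₁ k₂ l₁ l₂ ∧
          c * (n₁ m : ℝ) * (n₂ m : ℝ) * (1 - w m) ≤
            overlapCount (G m ω) (c₁ m) (c₂ m) g h k₁ k₂ l₁' l₂ ∧
          B₀ l₁ l₂ ≠ B₀ l₁' l₂}) atTop (𝓝 1) := by
  classical
  refine ⟨π₀ ^ 2 / (4 * (K₁ : ℝ) ^ 2 * (K₂ : ℝ)), by positivity, ?_⟩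
  set c : ℝ := π₀ ^ 2 / (4 * (K₁ : ℝ) ^ 2 * (K₂ : ℝ)) with hc_def
  clear_value c
  intro K₁' K₂' hK₁'pos hK₁'lt hK₂'pos hK₂'le B₀ hB₀ n₁ n₂ hn₁ hn₂ w hw hminw c₁ c₂ hc₁ hc₂
    Ω _ _ G hG
  set α : ℝ := π₀ ^ 2 / (2 * (K₁ : ℝ) ^ 2 * (K₂ : ℝ)) with hα_def
  clear_value α
  have hαpos : 0 < α := by rw [hα_def]; positivity
  -- the good event
  set good : (m : ℕ) → Set (Ω m) := fun m =>
    {ω | ∀ (U : Finset (Fin (n₁ m))) (V : Finset (Fin (n₂ m))),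
        α * (n₁ m : ℝ) * (n₂ m : ℝ) ≤ (U.card : ℝ) * (V.card : ℝ) →
        (U.card : ℝ) * (V.card : ℝ) * (1 - w m) / 2 ≤
          ∑ i ∈ U, ∑ j ∈ V, (if G m ω i j = 1 then (0:ℝ) else 1)} with hgood_def
  set ev : (m : ℕ) → Set (Ω m) := fun m => {ω |
        ∀ (g : Fin (n₁ m) → Fin K₁') (h : Fin (n₂ m) → Fin K₂'),
        ∃ (l₁ l₁' : Fin K₁) (k₁ : Fin K₁') (l₂ : Fin K₂) (k₂ : Fin K₂'),
          l₁ ≠ l₁' ∧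
          c * (n₁ m : ℝ) * (n₂ m : ℝ) * (1 - w m) ≤
            overlapCount (G m ω) (c₁ m) (c₂ m) g h k₁ k₂ l₁ l₂ ∧
          c * (n₁ m : ℝ) * (n₂ m : ℝ) * (1 - w m) ≤
            overlapCount (G m ω) (c₁ m) (c₂ m) g h k₁ k₂ l₁' l₂ ∧
          B₀ l₁ l₂ ≠ B₀ l₁' l₂} with hev_def
  -- Step A: deterministic inclusion
  have hincl : ∀ m, good m ⊆ ev m := by
    intro m ω hω g h
    have hω' : ∀ (U : Finset (Fin (n₁ m))) (V : Finset (Fin (n₂ m))),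
        α * (n₁ m : ℝ) * (n₂ m : ℝ) ≤ (U.card : ℝ) * (V.card : ℝ) →
        (U.card : ℝ) * (V.card : ℝ) * (1 - w m) / 2 ≤
          ∑ i ∈ U, ∑ j ∈ V, (if G m ω i j = 1 then (0:ℝ) else 1) := hω
    have hT1 : ∀ l : Fin K₁, π₀ * (n₁ m : ℝ) ≤
        ((Finset.univ.filter fun i => c₁ m i = l).card : ℝ) := fun l => hc₁ m l
    have hT2 : ∀ l : Fin K₂, π₀ * (n₂ m : ℝ) ≤
        ((Finset.univ.filter fun j => c₂ m j = l).card : ℝ) := fun l => hc₂ m l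
    have hK₁R : (0:ℝ) < (K₁ : ℝ) := by exact_mod_cast hK₁pos
    have hK₂R : (0:ℝ) < (K₂ : ℝ) := by exact_mod_cast hK₂pos
    have hK₁'R : (0:ℝ) < (K₁' : ℝ) := by exact_mod_cast hK₁'pos
    have hK₂'R : (0:ℝ) < (K₂' : ℝ) := by exact_mod_cast hK₂'pos
    have hK₁'leR : (K₁' : ℝ) ≤ (K₁ : ℝ) := by exact_mod_cast hK₁'lt.le
    have hK₂'leR : (K₂' : ℝ) ≤ 2 * (K₁ : ℝ) * (K₂ : ℝ) := by exact_mod_cast hK₂'le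
    have hwm : (0:ℝ) ≤ 1 - w m := by have := (hw m).2; linarith
    set kch : Fin K₁ → Fin K₁' := fun l =>
      Classical.choose (pigeonhole_card hK₁'pos (Finset.univ.filter fun i => c₁ m i = l) g)
      with hkch_def
    have hkch : ∀ l : Fin K₁,
        (((Finset.univ.filter fun i => c₁ m i = l).card : ℝ)) / (K₁' : ℝ) ≤
        ((((Finset.univ.filter fun i => c₁ m i = l).filter fun i => g i = kch l).card : ℝ)) :=
      fun l => Classical.choose_spec
        (pigeonhole_card hK₁'pos (Finset.univ.filter fun i => c₁ m i = l) g)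
    obtain ⟨l₁, l₁', hne, heq⟩ := Fintype.exists_ne_map_eq_of_card_lt kch
      (by simpa [Fintype.card_fin] using hK₁'lt)
    obtain ⟨l₂, hB₀ne⟩ := hB₀ l₁ l₁' hne
    obtain ⟨k₂, hk₂⟩ := pigeonhole_card hK₂'pos (Finset.univ.filter fun j => c₂ m j = l₂) h
    have main : ∀ l : Fin K₁,
        π₀ * (n₁ m : ℝ) / (K₁' : ℝ) ≤
          ((((Finset.univ.filter fun i => c₁ m i = l).filter
            fun i => g i = kch l₁).card : ℝ)) →
        c * (n₁ m : ℝ) * (n₂ m : ℝ) * (1 - w m) ≤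
          overlapCount (G m ω) (c₁ m) (c₂ m) g h (kch l₁) k₂ l l₂ := by
      intro l hWcard
      set W : Finset (Fin (n₁ m)) := (Finset.univ.filter fun i => c₁ m i = l).filter
        (fun i => g i = kch l₁) with hW_def
      set V : Finset (Fin (n₂ m)) := (Finset.univ.filter fun j => c₂ m j = l₂).filter
        (fun j => h j = k₂) with hV_def
      have hW : π₀ * (n₁ m : ℝ) / (K₁ : ℝ) ≤ (W.card : ℝ) := by
        refine le_trans ?_ hWcard
        have hnum : (0:ℝ) ≤ π₀ * (n₁ m : ℝ) := by positivity
        gcongr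
      have hV : π₀ * (n₂ m : ℝ) / (2 * (K₁ : ℝ) * (K₂ : ℝ)) ≤ (V.card : ℝ) := by
        refine le_trans ?_ hk₂
        have h1 : π₀ * (n₂ m : ℝ) ≤ ((Finset.univ.filter fun j => c₂ m j = l₂).card : ℝ) :=
          hT2 l₂
        have hnum : (0:ℝ) ≤ π₀ * (n₂ m : ℝ) := by positivity
        gcongr
      have heq2 : α * (n₁ m : ℝ) * (n₂ m : ℝ) =
          (π₀ * (n₁ m : ℝ) / (K₁ : ℝ)) * (π₀ * (n₂ m : ℝ) / (2 * (K₁ : ℝ) * (K₂ : ℝ))) := by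
        rw [hα_def]
        field_simp
      have hrect : α * (n₁ m : ℝ) * (n₂ m : ℝ) ≤ (W.card : ℝ) * (V.card : ℝ) := by
        rw [heq2]
        exact mul_le_mul hW hV (by positivity) (Nat.cast_nonneg _)
      have hgood := hω' W V hrect
      rw [overlap_eq_sum]
      refine le_trans ?_ hgood
      have hcα : α = 2 * c := by
        rw [hα_def, hc_def]
        field_simp
        ring
      have h6 : α * (n₁ m : ℝ) * (n₂ m : ℝ) * (1 - w m) ≤
          ((W.card : ℝ) * (V.card : ℝ)) * (1 - w m) := by
        have := mul_le_mul_of_nonneg_right hrect hwm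
        linarith
      rw [hcα] at h6
      linarith
    refine ⟨l₁, l₁', kch l₁, l₂, k₂, hne, ?_, ?_, hB₀ne⟩
    · refine main l₁ (le_trans ?_ (hkch l₁))
      have := hT1 l₁
      gcongr
    · have h1 : π₀ * (n₁ m : ℝ) / (K₁' : ℝ) ≤
          (((Finset.univ.filter fun i => c₁ m i = l₁').card : ℝ)) / (K₁' : ℝ) := by
        have := hT1 l₁'
        gcongr
      have h2 := hkch l₁'
      rw [← heq] at h2
      exact main l₁' (le_trans h1 h2)
  -- Step B: per-m lower bound for the good event
  have hlow : ∀ m, ENNReal.ofReal (1 - (2:ℝ) ^ (n₁ m + n₂ m) *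
      Real.exp (-(α * (n₁ m : ℝ) * (n₂ m : ℝ) * (1 - w m)) / 8)) ≤ ℙ (ev m) := by
    intro m
    have h1 := good_event_bound (G m) (le_of_lt (hw m).1) (hw m).2 (hG m) α
    have h2 : (1 : ℝ≥0∞) - ((2 : ℝ≥0∞) ^ (n₁ m + n₂ m)) *
        ENNReal.ofReal (Real.exp (-(α * (n₁ m : ℝ) * (n₂ m : ℝ) * (1 - w m)) / 8)) =
        ENNReal.ofReal (1 - (2:ℝ) ^ (n₁ m + n₂ m) *
          Real.exp (-(α * (n₁ m : ℝ) * (n₂ m : ℝ) * (1 - w m)) / 8)) := by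
      rw [ENNReal.ofReal_sub _ (by positivity), ENNReal.ofReal_one,
        ENNReal.ofReal_mul (by positivity), ENNReal.ofReal_pow (by norm_num)]
      norm_num
    rw [← h2]
    exact le_trans h1 (measure_mono (hincl m))
  -- Step C: the lower bound tends to 1
  have hC : Tendsto (fun m => ENNReal.ofReal (1 - (2:ℝ) ^ (n₁ m + n₂ m) *
      Real.exp (-(α * (n₁ m : ℝ) * (n₂ m : ℝ) * (1 - w m)) / 8))) atTop (𝓝 1) := by
    have hδ : Tendsto (fun m => (2:ℝ) ^ (n₁ m + n₂ m) *
        Real.exp (-(α * (n₁ m : ℝ) * (n₂ m : ℝ) * (1 - w m)) / 8)) atTop (𝓝 0) := by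
      have hδeq : ∀ m, (2:ℝ) ^ (n₁ m + n₂ m) *
          Real.exp (-(α * (n₁ m : ℝ) * (n₂ m : ℝ) * (1 - w m)) / 8) =
          Real.exp (((n₁ m : ℝ) + (n₂ m : ℝ)) * Real.log 2 +
            -(α * (n₁ m : ℝ) * (n₂ m : ℝ) * (1 - w m)) / 8) := by
        intro m
        have h2 : (2:ℝ) ^ (n₁ m + n₂ m) =
            Real.exp (((n₁ m + n₂ m : ℕ) : ℝ) * Real.log 2) := by
          rw [Real.exp_nat_mul, Real.exp_log (by norm_num : (0:ℝ) < 2)]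
        rw [h2, ← Real.exp_add]
        congr 1
        push_cast
        ring
      have hexp : Tendsto (fun m => ((n₁ m : ℝ) + (n₂ m : ℝ)) * Real.log 2 +
          -(α * (n₁ m : ℝ) * (n₂ m : ℝ) * (1 - w m)) / 8) atTop atBot := by
        have hsum : Tendsto (fun m => (n₁ m : ℝ) + (n₂ m : ℝ)) atTop atTop :=
          Tendsto.atTop_add_atTop (tendsto_natCast_atTop_atTop.comp hn₁)
            (tendsto_natCast_atTop_atTop.comp hn₂)
        have hneg : Tendsto (fun m => -((n₁ m : ℝ) + (n₂ m : ℝ))) atTop atBot :=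
          tendsto_neg_atBot_iff.mpr hsum
        refine tendsto_atBot_mono' atTop ?_ hneg
        have hev := hminw.eventually_ge_atTop (16 * (Real.log 2 + 1) / α)
        filter_upwards [hev] with m hm
        set a : ℝ := (n₁ m : ℝ) with ha_def
        set b : ℝ := (n₂ m : ℝ) with hb_def
        set q : ℝ := 1 - w m with hq_def
        clear_value a b q
        have hq0 : 0 ≤ q := by have := (hw m).2; rw [hq_def]; linarith
        have ha0 : 0 ≤ a := ha_def ▸ Nat.cast_nonneg _
        have hb0 : 0 ≤ b := hb_def ▸ Nat.cast_nonneg _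
        have hlog2 : 0 ≤ Real.log 2 := Real.log_nonneg one_le_two
        have hmin : min a b * q ≥ 16 * (Real.log 2 + 1) / α := by
          have : ((min (n₁ m) (n₂ m) : ℕ) : ℝ) = min a b := by
            rw [ha_def, hb_def, Nat.cast_min]
          rw [← this]
          exact hm
        have hkey : α * (min a b * q) ≥ 16 * (Real.log 2 + 1) := by
          have h' := mul_le_mul_of_nonneg_left hmin (le_of_lt hαpos)
          rwa [mul_div_cancel₀ _ (ne_of_gt hαpos)] at h'
        have hgoal : (a + b) * Real.log 2 + -(α * a * b * q) / 8 ≤ -(a + b) := by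
          rcases le_total a b with hab | hab
          · have hmin_eq : min a b = a := min_eq_left hab
            rw [hmin_eq, ← mul_assoc] at hkey
            have h3 : 2 * (Real.log 2 + 1) ≤ α * a * q / 8 := by linarith
            have h4a : (Real.log 2 + 1) * (a + b) ≤ 2 * (Real.log 2 + 1) * b := by nlinarith
            have h4b : 2 * (Real.log 2 + 1) * b ≤ (α * a * q / 8) * b :=
              mul_le_mul_of_nonneg_right h3 hb0
            have h5 : (α * a * q / 8) * b = α * a * b * q / 8 := by ring
            nlinarith
          · have hmin_eq : min a b = b := min_eq_right hab
            rw [hmin_eq, ← mul_assoc] at hkey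
            have h3 : 2 * (Real.log 2 + 1) ≤ α * b * q / 8 := by linarith
            have h4a : (Real.log 2 + 1) * (a + b) ≤ 2 * (Real.log 2 + 1) * a := by nlinarith
            have h4b : 2 * (Real.log 2 + 1) * a ≤ (α * b * q / 8) * a :=
              mul_le_mul_of_nonneg_right h3 ha0
            have h5 : (α * b * q / 8) * a = α * a * b * q / 8 := by ring
            nlinarith
        exact hgoal
      have heq : (fun m => (2:ℝ) ^ (n₁ m + n₂ m) *
          Real.exp (-(α * (n₁ m : ℝ) * (n₂ m : ℝ) * (1 - w m)) / 8)) =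
          fun m => Real.exp (((n₁ m : ℝ) + (n₂ m : ℝ)) * Real.log 2 +
            -(α * (n₁ m : ℝ) * (n₂ m : ℝ) * (1 - w m)) / 8) := funext hδeq
      rw [heq]
      exact Real.tendsto_exp_atBot.comp hexp
    have h1 : Tendsto (fun m => 1 - (2:ℝ) ^ (n₁ m + n₂ m) *
        Real.exp (-(α * (n₁ m : ℝ) * (n₂ m : ℝ) * (1 - w m)) / 8)) atTop (𝓝 1) := by
      have := (tendsto_const_nhds (x := (1:ℝ)) (f := atTop)).sub hδ
      simpa using this
    have h2 := (ENNReal.continuous_ofReal.tendsto 1).comp h1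
    rw [ENNReal.ofReal_one] at h2
    exact h2
  refine tendsto_of_tendsto_of_tendsto_of_le_of_le hC tendsto_const_nhds hlow
    fun m => prob_le_one

end BCV
end

section
/- In the bipartite SBM with edge split, let K₁' < K₁ and K₂' > 2K₁K₂, and let ℓ_{K₁',K₂'}(A,𝓔ᶜ) be the BCV fitted test loss at candidate (K₁',K₂') and ℓ₀(A,𝓔ᶜ) the oracle test loss. Then Pr[ℓ_{K₁',K₂'}(A,𝓔ᶜ) − ℓ₀(A,𝓔ᶜ) ≤ −2K₁K₂K₁'K₂'·log n] ≤ 2K₁²K₂/n³, where n = max{n₁,n₂}. -/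
open MeasureTheory ProbabilityTheory Matrix Filter Finset
open scoped ENNReal Topology

namespace BCV

section AuxHoeffding
open Real

private lemma aux_convex (a y : ℝ) (h1 : -1 ≤ y) (h2 : y ≤ 1) :
    exp (a*y) ≤ (1+y)/2 * exp a + (1-y)/2 * exp (-a) := by
  have h := convexOn_exp.2 (Set.mem_univ a) (Set.mem_univ (-a))
    (by linarith : (0:ℝ) ≤ (1+y)/2) (by linarith : (0:ℝ) ≤ (1-y)/2) (by ring)
  simp only [smul_eq_mul] at h
  have e2 : a*y = (1+y)/2*a + (1-y)/2*(-a) := by ring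
  rw [e2]; exact h

private lemma aux_mgf_bound (a p : ℝ) (hp0 : 0 ≤ p) (hp1 : p ≤ 1) :
    p * exp (a*(1-p)) + (1-p) * exp (a*(0-p)) ≤ exp (a^2/2) := by
  have h1 := aux_convex a (1-p) (by linarith) (by linarith)
  have h2 := aux_convex a (0-p) (by linarith) (by linarith)
  have hc : Real.cosh a ≤ exp (a^2/2) := Real.cosh_le_exp_half_sq a
  rw [Real.cosh_eq] at hc
  nlinarith [mul_le_mul_of_nonneg_left h1 hp0,
    mul_le_mul_of_nonneg_left h2 (by linarith : (0:ℝ) ≤ 1-p),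
    exp_pos a, exp_pos (-a)]

private lemma aux_bern_integral {Ω : Type*} [MeasureSpace Ω] [IsProbabilityMeasure (ℙ : Measure Ω)]
    (X : Ω → ℝ) (hm : Measurable X) (h01 : ∀ ω, X ω = 0 ∨ X ω = 1)
    (p : ℝ) (hp0 : 0 ≤ p) (hp1 : p ≤ 1)
    (hpr : ℙ {ω | X ω = 1} = ENNReal.ofReal p) (a : ℝ) :
    ∫ ω, exp (a * (X ω - p)) ∂ℙ ≤ exp (a^2/2) := by
  set s1 : Set Ω := {ω | X ω = 1} with hs1
  have hms : MeasurableSet s1 := hm (measurableSet_singleton 1)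
  have hbound : ∀ ω, ‖exp (a * (X ω - p))‖ ≤ exp |a| := by
    intro ω
    rw [Real.norm_eq_abs, abs_of_pos (exp_pos _)]
    apply exp_le_exp.2
    calc a * (X ω - p) ≤ |a * (X ω - p)| := le_abs_self _
      _ = |a| * |X ω - p| := abs_mul _ _
      _ ≤ |a| * 1 := by
          apply mul_le_mul_of_nonneg_left _ (abs_nonneg a)
          rcases h01 ω with h | h <;> rw [h] <;> rw [abs_le] <;> constructor <;> linarith
      _ = |a| := mul_one _
  have hint : Integrable (fun ω => exp (a * (X ω - p))) ℙ :=
    (integrable_const (exp |a|)).mono'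
      (((hm.sub_const p).const_mul a).exp.aestronglyMeasurable)
      (Filter.Eventually.of_forall hbound)
  have hsplit : ∫ ω, exp (a * (X ω - p)) ∂ℙ =
      (∫ ω in s1, exp (a * (X ω - p)) ∂ℙ) + ∫ ω in s1ᶜ, exp (a * (X ω - p)) ∂ℙ :=
    (integral_add_compl hms hint).symm
  have h1 : ∫ ω in s1, exp (a * (X ω - p)) ∂ℙ = p * exp (a * (1 - p)) := by
    rw [setIntegral_congr_fun hms (g := fun _ => exp (a * (1 - p)))
      (fun ω hω => by rw [show X ω = 1 from hω])]
    rw [setIntegral_const, measureReal_def, hpr, ENNReal.toReal_ofReal hp0, smul_eq_mul]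
  have hc : ℙ s1ᶜ = 1 - ENNReal.ofReal p := by
    rw [measure_compl hms (measure_ne_top _ _), hpr, measure_univ]
  have h0 : ∫ ω in s1ᶜ, exp (a * (X ω - p)) ∂ℙ = (1-p) * exp (a * (0 - p)) := by
    rw [setIntegral_congr_fun hms.compl (g := fun _ => exp (a * (0 - p)))
      (fun ω hω => by
        rcases h01 ω with h | h
        · rw [h]
        · exact absurd h hω)]
    rw [setIntegral_const, measureReal_def, hc, smul_eq_mul,
      ENNReal.toReal_sub_of_le (ENNReal.ofReal_le_one.2 hp1) ENNReal.one_ne_top,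
      ENNReal.toReal_one, ENNReal.toReal_ofReal hp0]
  rw [hsplit, h1, h0]
  exact aux_mgf_bound a p hp0 hp1

private lemma aux_tail_bound {Ω : Type*} [MeasureSpace Ω] [IsProbabilityMeasure (ℙ : Measure Ω)]
    {ι : Type*} (X : ι → Ω → ℝ) (p : ι → ℝ)
    (hmeas : ∀ i, Measurable (X i)) (h01 : ∀ i ω, X i ω = 0 ∨ X i ω = 1)
    (hpr : ∀ i, ℙ {ω | X i ω = 1} = ENNReal.ofReal (p i))
    (hp0 : ∀ i, 0 ≤ p i) (hp1 : ∀ i, p i ≤ 1)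
    (hind : iIndepFun X ℙ)
    (J : Finset ι) (c : ι → ℝ) (u s : ℝ) (hs : 0 ≤ s) :
    ℙ {ω | ∑ q ∈ J, c q * (X q ω - p q) ≤ -u} ≤
      ENNReal.ofReal (exp (-(s*u) + s^2 * (∑ q ∈ J, (c q)^2) / 2)) := by
  classical
  set Z : ι → Ω → ℝ := fun q ω => c q * (X q ω - p q) with hZ
  have hZmeas : ∀ q, Measurable (Z q) := fun q => ((hmeas q).sub_const (p q)).const_mul (c q)
  have habs : ∀ q ω, |X q ω - p q| ≤ 1 := by
    intro q ω
    rcases h01 q ω with h | h <;> rw [h, abs_le] <;>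
      constructor <;> linarith [hp0 q, hp1 q]
  have hbound : ∀ ω, ‖exp (-s * ∑ q ∈ J, Z q ω)‖ ≤ exp (s * ∑ q ∈ J, |c q|) := by
    intro ω
    rw [Real.norm_eq_abs, abs_of_pos (exp_pos _), exp_le_exp]
    calc -s * ∑ q ∈ J, Z q ω = ∑ q ∈ J, (-s) * Z q ω := by rw [Finset.mul_sum]
      _ ≤ ∑ q ∈ J, s * |c q| := by
          apply Finset.sum_le_sum
          intro q _
          calc (-s) * Z q ω ≤ |(-s) * Z q ω| := le_abs_self _
            _ = s * (|c q| * |X q ω - p q|) := by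
                rw [abs_mul, abs_neg, abs_of_nonneg hs, hZ, abs_mul]
            _ ≤ s * (|c q| * 1) := by
                apply mul_le_mul_of_nonneg_left _ hs
                exact mul_le_mul_of_nonneg_left (habs q ω) (abs_nonneg _)
            _ = s * |c q| := by rw [mul_one]
      _ = s * ∑ q ∈ J, |c q| := (Finset.mul_sum _ _ _).symm
  have hsum_meas : Measurable (fun ω => ∑ q ∈ J, Z q ω) :=
    Finset.measurable_sum J (fun q _ => hZmeas q)
  have hint : Integrable (fun ω => exp (-s * ∑ q ∈ J, Z q ω)) ℙ :=
    (integrable_const _).mono' ((hsum_meas.const_mul (-s)).exp.aestronglyMeasurable)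
      (Filter.Eventually.of_forall hbound)
  have hch := measure_le_le_exp_mul_mgf (X := fun ω => ∑ q ∈ J, Z q ω) (μ := ℙ)
    (-u) (neg_nonpos.2 hs) hint
  have hindZ : iIndepFun Z ℙ := by
    have := hind.comp (fun q x => c q * (x - p q))
      (fun q => (measurable_id.sub_const (p q)).const_mul (c q))
    exact this
  have hmgf_eq : mgf (fun ω => ∑ q ∈ J, Z q ω) ℙ (-s) = ∏ q ∈ J, mgf (Z q) ℙ (-s) := by
    rw [show (fun ω => ∑ q ∈ J, Z q ω) = ∑ q ∈ J, Z q by funext ω; simp [Finset.sum_apply]]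
    exact hindZ.mgf_sum hZmeas J
  have hfac : ∀ q ∈ J, mgf (Z q) ℙ (-s) ≤ exp (s^2 * (c q)^2 / 2) := by
    intro q _
    have heq : mgf (Z q) ℙ (-s) = ∫ ω, exp ((-s * c q) * (X q ω - p q)) ∂ℙ := by
      unfold mgf
      congr 1
      funext ω
      rw [hZ]; ring_nf
    rw [heq]
    calc ∫ ω, exp ((-s * c q) * (X q ω - p q)) ∂ℙ ≤ exp ((-s * c q)^2/2) :=
          aux_bern_integral (X q) (hmeas q) (h01 q) (p q) (hp0 q) (hp1 q) (hpr q) _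
      _ = exp (s^2 * (c q)^2 / 2) := by ring_nf
  have hprod : ∏ q ∈ J, mgf (Z q) ℙ (-s) ≤ exp (s^2 * (∑ q ∈ J, (c q)^2) / 2) := by
    calc ∏ q ∈ J, mgf (Z q) ℙ (-s) ≤ ∏ q ∈ J, exp (s^2 * (c q)^2 / 2) :=
          Finset.prod_le_prod (fun q _ => mgf_nonneg) hfac
      _ = exp (∑ q ∈ J, s^2 * (c q)^2 / 2) := (Real.exp_sum _ _).symm
      _ = exp (s^2 * (∑ q ∈ J, (c q)^2) / 2) := by rw [← Finset.sum_div, ← Finset.mul_sum]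
  have hfinal : (ℙ {ω | ∑ q ∈ J, Z q ω ≤ -u}).toReal ≤
      exp (-(s*u) + s^2 * (∑ q ∈ J, (c q)^2) / 2) := by
    calc (ℙ {ω | ∑ q ∈ J, Z q ω ≤ -u}).toReal
        ≤ exp (-(-s) * (-u)) * mgf (fun ω => ∑ q ∈ J, Z q ω) ℙ (-s) := hch
      _ ≤ exp (-(s*u)) * exp (s^2 * (∑ q ∈ J, (c q)^2) / 2) := by
          rw [hmgf_eq]
          apply mul_le_mul_of_nonneg_left hprod (le_of_lt (exp_pos _)) |>.trans
          rw [show -(-s) * (-u) = -(s*u) by ring]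
      _ = exp (-(s*u) + s^2 * (∑ q ∈ J, (c q)^2) / 2) := (Real.exp_add _ _).symm
  calc ℙ {ω | ∑ q ∈ J, c q * (X q ω - p q) ≤ -u}
      = ENNReal.ofReal ((ℙ {ω | ∑ q ∈ J, Z q ω ≤ -u}).toReal) := by
        rw [ENNReal.ofReal_toReal (measure_ne_top _ _)]
    _ ≤ ENNReal.ofReal (exp (-(s*u) + s^2 * (∑ q ∈ J, (c q)^2) / 2)) :=
        ENNReal.ofReal_le_ofReal hfinal

private lemma bool_eq_of_iff {a b : Bool} (h : (a = true) ↔ (b = true)) : a = b := by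
  cases a <;> cases b <;> simp_all

private lemma aux_loss_split {n₁ n₂ : ℕ} (Am Gm : Matrix (Fin n₁) (Fin n₂) ℝ)
    (ph pm : Fin n₁ → Fin n₂ → ℝ) (Q : Finset (Fin n₁ × Fin n₂))
    (hQ : ∀ q, q ∈ Q ↔ ¬ (Gm q.1 q.2 = 1)) :
    (∑ i, ∑ j, if Gm i j = 1 then (0:ℝ) else (Am i j - ph i j)^2)
    - (∑ i, ∑ j, if Gm i j = 1 then (0:ℝ) else (Am i j - pm i j)^2)
    = (∑ q ∈ Q, (ph q.1 q.2 - pm q.1 q.2)^2)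
    + ∑ q ∈ Q, (2*(pm q.1 q.2 - ph q.1 q.2)) * (Am q.1 q.2 - pm q.1 q.2) := by
  classical
  have key : ∀ f : Fin n₁ → Fin n₂ → ℝ,
      (∑ i, ∑ j, if Gm i j = 1 then (0:ℝ) else f i j) = ∑ q ∈ Q, f q.1 q.2 := by
    intro f
    have hQ' : Q = Finset.univ.filter (fun q : Fin n₁ × Fin n₂ => ¬ (Gm q.1 q.2 = 1)) := by
      ext q; simp [hQ]
    rw [hQ', Finset.sum_filter,
      Fintype.sum_prod_type (f := fun a : Fin n₁ × Fin n₂ => if ¬ Gm a.1 a.2 = 1 then f a.1 a.2 else 0)]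
    apply Finset.sum_congr rfl
    intro i _
    apply Finset.sum_congr rfl
    intro j _
    by_cases h : Gm i j = 1 <;> simp [h]
  rw [key, key, ← Finset.sum_sub_distrib, ← Finset.sum_add_distrib]
  apply Finset.sum_congr rfl
  intro q _
  ring

end AuxHoeffding

/-- Hoeffding-type tail bound for overfitted candidates with
K₁' < K₁ and K₂' > 2K₁K₂ (Proposition A.7). -/
theorem stmt_12 (n₁ n₂ K₁ K₂ K₁' K₂' : ℕ)
    (hn₁ : 0 < n₁) (hn₂ : 0 < n₂)
    (hK₁pos : 0 < K₁) (hK₂pos : 0 < K₂) (hK₁' : 0 < K₁')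
    (hlt : K₁' < K₁) (hgt : 2 * K₁ * K₂ < K₂')
    (c₁ : Fin n₁ → Fin K₁) (c₂ : Fin n₂ → Fin K₂)
    (hc₁ : Function.Surjective c₁) (hc₂ : Function.Surjective c₂)
    (B : Matrix (Fin K₁) (Fin K₂) ℝ) (hB : ∀ k l, 0 ≤ B k l ∧ B k l ≤ 1)
    (w : ℝ) (hw0 : 0 < w) (hw1 : w < 1)
    (Ω : Type) [MeasureSpace Ω] [IsProbabilityMeasure (ℙ : Measure Ω)]
    (A G : Ω → Matrix (Fin n₁) (Fin n₂) ℝ)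
    (hsplit : SBMSplit A G (Matrix.of fun i j => B (c₁ i) (c₂ j)) w)
    (M : ℝ) (hM : 1 ≤ M)
    (ch1 : Ω → Fin n₁ → Fin K₁') (ch2 : Ω → Fin n₂ → Fin K₂')
    (hbcv : IsBCVLabeling M A G w ch1 ch2)
    (htrain : ∀ ω ω', G ω = G ω' →
      (Matrix.of fun i j => A ω i j * G ω i j) =
        (Matrix.of fun i j => A ω' i j * G ω' i j) →
      ch1 ω = ch1 ω' ∧ ch2 ω = ch2 ω') :
    ℙ {ω | fittedLoss (A ω) (G ω) (ch1 ω) (ch2 ω) -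
        oracleLoss (A ω) (G ω) (Matrix.of fun i j => B (c₁ i) (c₂ j)) ≤
        -(2 * (K₁ : ℝ) * (K₂ : ℝ) * (K₁' : ℝ) * (K₂' : ℝ) *
          Real.log (max n₁ n₂))} ≤
      ENNReal.ofReal (2 * (K₁ : ℝ) ^ 2 * (K₂ : ℝ) / ((max n₁ n₂ : ℕ) : ℝ) ^ 3) := by
  classical
  -- numeric setup
  have hK₁2 : 2 ≤ K₁ := by omega
  have hK₂'5 : 5 ≤ K₂' := by nlinarith [hK₁pos, hK₂pos, hK₁2]
  have hn₁K : K₁ ≤ n₁ := by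
    simpa using Fintype.card_le_of_surjective c₁ hc₁
  have hnn : 2 ≤ max n₁ n₂ := le_trans hK₁2 (le_trans hn₁K (le_max_left _ _))
  have hnR : (2:ℝ) ≤ max (n₁:ℝ) (n₂:ℝ) := by
    rw [← Nat.cast_max]; exact_mod_cast hnn
  have hlogpos : 0 < Real.log (max (n₁:ℝ) (n₂:ℝ)) := Real.log_pos (by linarith)
  set t : ℝ := 2 * (K₁:ℝ) * (K₂:ℝ) * (K₁':ℝ) * (K₂':ℝ) * Real.log (max (n₁:ℝ) (n₂:ℝ))
    with htdef
  have htpos : 0 < t := by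
    have h1 : (0:ℝ) < K₁ := by exact_mod_cast hK₁pos
    have h2 : (0:ℝ) < K₂ := by exact_mod_cast hK₂pos
    have h3 : (0:ℝ) < K₁' := by exact_mod_cast hK₁'
    have h4 : (0:ℝ) < K₂' := by exact_mod_cast (by omega : 0 < K₂')
    positivity
  -- the independent family
  set F : (Fin n₁ × Fin n₂) ⊕ (Fin n₁ × Fin n₂) → Ω → ℝ :=
    Sum.elim (fun (q : Fin n₁ × Fin n₂) ω => A ω q.1 q.2)
             (fun (q : Fin n₁ × Fin n₂) ω => G ω q.1 q.2) with hFdef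
  set pp : (Fin n₁ × Fin n₂) ⊕ (Fin n₁ × Fin n₂) → ℝ :=
    Sum.elim (fun q => (Matrix.of fun i j => B (c₁ i) (c₂ j)) q.1 q.2)
             (fun _ => w) with hppdef
  have hfam : IndepBernoulliFamily F pp := hsplit
  obtain ⟨hFmeas, hF01, hFpr, hFind⟩ := hfam
  have hpp0 : ∀ x, 0 ≤ pp x := by
    rintro (q | q)
    · exact (hB (c₁ q.1) (c₂ q.2)).1
    · exact hw0.le
  have hpp1 : ∀ x, pp x ≤ 1 := by
    rintro (q | q)
    · exact (hB (c₁ q.1) (c₂ q.2)).2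
    · exact hw1.le
  have hGmeas : ∀ i j, Measurable (fun ω => G ω i j) := fun i j => hFmeas (Sum.inr (i, j))
  have hAmeas : ∀ i j, Measurable (fun ω => A ω i j) := fun i j => hFmeas (Sum.inl (i, j))
  have hG01 : ∀ (ω : Ω) i j, G ω i j = 0 ∨ G ω i j = 1 := fun ω i j => hF01 (Sum.inr (i, j)) ω
  have hA01 : ∀ (ω : Ω) i j, A ω i j = 0 ∨ A ω i j = 1 := fun ω i j => hF01 (Sum.inl (i, j)) ω
  -- target event
  set E : Set Ω := {ω | fittedLoss (A ω) (G ω) (ch1 ω) (ch2 ω) -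
      oracleLoss (A ω) (G ω) (Matrix.of fun i j => B (c₁ i) (c₂ j)) ≤ -t} with hEdef
  -- fibers of the training configuration
  set fib : ((Fin n₁ × Fin n₂) → Bool × Bool) → Set Ω := fun b =>
    {ω | ∀ q : Fin n₁ × Fin n₂, (G ω q.1 q.2 = 1 ↔ (b q).1 = true) ∧
        (A ω q.1 q.2 * G ω q.1 q.2 = 1 ↔ (b q).2 = true)} with hfibdef
  have hfibmeas : ∀ b, MeasurableSet (fib b) := by
    intro b
    have : fib b = ⋂ q : Fin n₁ × Fin n₂,
        ({ω | G ω q.1 q.2 = 1 ↔ (b q).1 = true} ∩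
         {ω | A ω q.1 q.2 * G ω q.1 q.2 = 1 ↔ (b q).2 = true}) := by
      ext ω; simp [hfibdef, Set.mem_iInter, forall_and]
    rw [this]
    apply MeasurableSet.iInter
    intro q
    have m1 : MeasurableSet {ω | G ω q.1 q.2 = 1} := hGmeas q.1 q.2 (measurableSet_singleton 1)
    have m2 : MeasurableSet {ω | A ω q.1 q.2 * G ω q.1 q.2 = 1} :=
      ((hAmeas q.1 q.2).mul (hGmeas q.1 q.2)) (measurableSet_singleton 1)
    apply MeasurableSet.inter
    · cases hb : (b q).1
      · have : {ω | G ω q.1 q.2 = 1 ↔ false = true} = {ω | G ω q.1 q.2 = 1}ᶜ := by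
          ext ω; simp
        rw [this]; exact m1.compl
      · have : {ω | G ω q.1 q.2 = 1 ↔ true = true} = {ω | G ω q.1 q.2 = 1} := by
          ext ω; simp
        rw [this]; exact m1
    · cases hb : (b q).2
      · have : {ω | A ω q.1 q.2 * G ω q.1 q.2 = 1 ↔ false = true} =
            {ω | A ω q.1 q.2 * G ω q.1 q.2 = 1}ᶜ := by ext ω; simp
        rw [this]; exact m2.compl
      · have : {ω | A ω q.1 q.2 * G ω q.1 q.2 = 1 ↔ true = true} =
            {ω | A ω q.1 q.2 * G ω q.1 q.2 = 1} := by ext ω; simp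
        rw [this]; exact m2
  have hcover : ∀ ω : Ω, ∃ b, ω ∈ fib b := by
    intro ω
    refine ⟨fun q => (decide (G ω q.1 q.2 = 1), decide (A ω q.1 q.2 * G ω q.1 q.2 = 1)),
      fun q => ⟨?_, ?_⟩⟩
    · show G ω q.1 q.2 = 1 ↔ decide (G ω q.1 q.2 = 1) = true
      exact Iff.of_eq (decide_eq_true_eq).symm
    · show A ω q.1 q.2 * G ω q.1 q.2 = 1 ↔ decide (A ω q.1 q.2 * G ω q.1 q.2 = 1) = true
      exact Iff.of_eq (decide_eq_true_eq).symm
  have hpd : Set.PairwiseDisjoint (↑(Finset.univ : Finset ((Fin n₁ × Fin n₂) → Bool × Bool)))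
      fib := by
    intro b _ b' _ hbb'
    rw [Function.onFun]
    rw [Set.disjoint_left]
    intro ω hω hω'
    apply hbb'
    funext q
    have h1 := hω q
    have h2 := hω' q
    exact Prod.ext (bool_eq_of_iff (h1.1.symm.trans h2.1))
      (bool_eq_of_iff (h1.2.symm.trans h2.2))
  -- the key per-fiber bound
  have hkey : ∀ b, ℙ (E ∩ fib b) ≤ ENNReal.ofReal (Real.exp (-(t/2))) * ℙ (fib b) := by
    intro b
    rcases Set.eq_empty_or_nonempty (fib b) with hemp | ⟨ω₀, hω₀⟩
    · rw [hemp]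
      simp
    · have hGent : ∀ ω, ω ∈ fib b → ∀ i j, G ω i j = G ω₀ i j := by
        intro ω hω i j
        have hiff : G ω i j = 1 ↔ G ω₀ i j = 1 := (hω (i, j)).1.trans ((hω₀ (i, j)).1).symm
        rcases hG01 ω i j with h | h <;> rcases hG01 ω₀ i j with h' | h' <;>
          rw [h, h'] at hiff ⊢ <;> first | rfl | (exfalso; revert hiff; norm_num)
      have hAent : ∀ ω, ω ∈ fib b → ∀ i j, G ω₀ i j = 1 → A ω i j = A ω₀ i j := by
        intro ω hω i j hg
        have hgω : G ω i j = 1 := by rw [hGent ω hω i j, hg]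
        have h1 := (hω (i, j)).2
        have h2 := (hω₀ (i, j)).2
        rw [hgω, mul_one] at h1
        rw [hg, mul_one] at h2
        have hiff : A ω i j = 1 ↔ A ω₀ i j = 1 := h1.trans h2.symm
        rcases hA01 ω i j with h | h <;> rcases hA01 ω₀ i j with h' | h' <;>
          rw [h, h'] at hiff ⊢ <;> first | rfl | (exfalso; revert hiff; norm_num)
      have hGeq : ∀ ω, ω ∈ fib b → G ω = G ω₀ := by
        intro ω hω; ext i j; exact hGent ω hω i j
      have hprodeq : ∀ ω, ω ∈ fib b →
          (Matrix.of fun i j => A ω i j * G ω i j) =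
            (Matrix.of fun i j => A ω₀ i j * G ω₀ i j) := by
        intro ω hω; ext i j
        simp only [Matrix.of_apply]
        by_cases hg : G ω₀ i j = 1
        · rw [hGent ω hω i j, hg, hAent ω hω i j hg]
        · have h0 : G ω₀ i j = 0 := (hG01 ω₀ i j).resolve_right hg
          rw [hGent ω hω i j, h0, mul_zero, mul_zero]
      have hch : ∀ ω, ω ∈ fib b → ch1 ω = ch1 ω₀ ∧ ch2 ω = ch2 ω₀ :=
        fun ω hω => htrain ω ω₀ (hGeq ω hω) (hprodeq ω hω)
      set phm : Fin n₁ → Fin n₂ → ℝ :=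
        fun i j => Bhat (A ω₀) (G ω₀) (ch1 ω₀) (ch2 ω₀) (ch1 ω₀ i) (ch2 ω₀ j) with hphm
      set pmm : Fin n₁ → Fin n₂ → ℝ := fun i j => B (c₁ i) (c₂ j) with hpmm
      set Qtest : Finset (Fin n₁ × Fin n₂) :=
        Finset.univ.filter (fun q : Fin n₁ × Fin n₂ => ¬ (G ω₀ q.1 q.2 = 1)) with hQtest
      set V : ℝ := ∑ q ∈ Qtest, (phm q.1 q.2 - pmm q.1 q.2)^2 with hV
      set cf : (Fin n₁ × Fin n₂) ⊕ (Fin n₁ × Fin n₂) → ℝ :=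
        Sum.elim (fun q => 2 * (pmm q.1 q.2 - phm q.1 q.2)) (fun _ => 0) with hcf
      set emb1 : (Fin n₁ × Fin n₂) ↪ (Fin n₁ × Fin n₂) ⊕ (Fin n₁ × Fin n₂) :=
        ⟨Sum.inl, Sum.inl_injective⟩ with hemb1
      set emb2 : (Fin n₁ × Fin n₂) ↪ (Fin n₁ × Fin n₂) ⊕ (Fin n₁ × Fin n₂) :=
        ⟨Sum.inr, Sum.inr_injective⟩ with hemb2
      set J : Finset ((Fin n₁ × Fin n₂) ⊕ (Fin n₁ × Fin n₂)) := Qtest.map emb1 with hJ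
      set ev1 : Set Ω := {ω | ∑ x ∈ J, cf x * (F x ω - pp x) ≤ -(t + V)} with hev1
      have hBh : ∀ ω, ω ∈ fib b → ∀ k₁ k₂,
          Bhat (A ω) (G ω₀) (ch1 ω₀) (ch2 ω₀) k₁ k₂
            = Bhat (A ω₀) (G ω₀) (ch1 ω₀) (ch2 ω₀) k₁ k₂ := by
        intro ω hω k₁ k₂
        unfold Bhat
        congr 1
        apply Finset.sum_congr rfl; intro i _
        apply Finset.sum_congr rfl; intro j _
        split_ifs with h
        · exact hAent ω hω i j h.1
        · rfl
      have hsubset : E ∩ fib b ⊆ ev1 ∩ fib b := by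
        rintro ω ⟨hE, hω⟩
        refine ⟨?_, hω⟩
        have hloss : fittedLoss (A ω) (G ω) (ch1 ω) (ch2 ω) -
            oracleLoss (A ω) (G ω) (Matrix.of fun i j => B (c₁ i) (c₂ j)) =
            V + ∑ q ∈ Qtest,
              (2 * (pmm q.1 q.2 - phm q.1 q.2)) * (A ω q.1 q.2 - pmm q.1 q.2) := by
          rw [hGeq ω hω, (hch ω hω).1, (hch ω hω).2]
          have hfit : fittedLoss (A ω) (G ω₀) (ch1 ω₀) (ch2 ω₀) =
              ∑ i, ∑ j, if G ω₀ i j = 1 then (0:ℝ) else (A ω i j - phm i j)^2 := by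
            unfold fittedLoss
            apply Finset.sum_congr rfl; intro i _
            apply Finset.sum_congr rfl; intro j _
            by_cases h : G ω₀ i j = 1
            · rw [if_pos h, if_pos h]
            · rw [if_neg h, if_neg h, hphm]
              rw [hBh ω hω]
          have hora : oracleLoss (A ω) (G ω₀) (Matrix.of fun i j => B (c₁ i) (c₂ j)) =
              ∑ i, ∑ j, if G ω₀ i j = 1 then (0:ℝ) else (A ω i j - pmm i j)^2 := rfl
          rw [hfit, hora, hV]
          exact aux_loss_split (A ω) (G ω₀) phm pmm Qtest
            (fun q => by rw [hQtest]; simp)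
        have hE' : fittedLoss (A ω) (G ω) (ch1 ω) (ch2 ω) -
            oracleLoss (A ω) (G ω) (Matrix.of fun i j => B (c₁ i) (c₂ j)) ≤ -t := hE
        rw [hloss] at hE'
        have hle : ∑ q ∈ Qtest,
            (2 * (pmm q.1 q.2 - phm q.1 q.2)) * (A ω q.1 q.2 - pmm q.1 q.2)
            ≤ -(t + V) := by linarith
        show ∑ x ∈ J, cf x * (F x ω - pp x) ≤ -(t + V)
        rw [hJ, Finset.sum_map]
        calc ∑ q ∈ Qtest, cf (emb1 q) * (F (emb1 q) ω - pp (emb1 q))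
            = ∑ q ∈ Qtest,
                (2 * (pmm q.1 q.2 - phm q.1 q.2)) * (A ω q.1 q.2 - pmm q.1 q.2) := by
              apply Finset.sum_congr rfl; intro q _
              rfl
          _ ≤ -(t + V) := hle
      have hcs : ∑ x ∈ J, (cf x)^2 = 4 * V := by
        rw [hJ, Finset.sum_map, hV, Finset.mul_sum]
        apply Finset.sum_congr rfl; intro q _
        show (cf (emb1 q))^2 = 4 * (phm q.1 q.2 - pmm q.1 q.2)^2
        show (2 * (pmm q.1 q.2 - phm q.1 q.2))^2 = 4 * (phm q.1 q.2 - pmm q.1 q.2)^2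
        ring
      have hev1b : ℙ ev1 ≤ ENNReal.ofReal (Real.exp (-(t/2))) := by
        have hb2 := aux_tail_bound F pp hFmeas hF01 hFpr hpp0 hpp1 hFind J cf (t + V)
          (1/2) (by norm_num)
        refine le_trans hb2 ?_
        apply ENNReal.ofReal_le_ofReal
        rw [hcs]
        apply le_of_eq
        ring
      set Qtr : Finset (Fin n₁ × Fin n₂) :=
        Finset.univ.filter (fun q : Fin n₁ × Fin n₂ => G ω₀ q.1 q.2 = 1) with hQtr
      set Ttr : Finset ((Fin n₁ × Fin n₂) ⊕ (Fin n₁ × Fin n₂)) :=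
        Qtr.map emb1 ∪ Finset.univ.map emb2 with hTtr
      have hdisjJT : Disjoint J Ttr := by
        rw [Finset.disjoint_left]
        intro x hxJ hxT
        rw [hJ, Finset.mem_map] at hxJ
        obtain ⟨q, hq, rfl⟩ := hxJ
        rw [hTtr, Finset.mem_union] at hxT
        rcases hxT with hxT | hxT
        · rw [Finset.mem_map] at hxT
          obtain ⟨q', hq', he⟩ := hxT
          have hqq : q' = q := Sum.inl_injective he
          subst hqq
          rw [hQtest, Finset.mem_filter] at hq
          rw [hQtr, Finset.mem_filter] at hq'
          exact hq.2 hq'.2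
        · rw [Finset.mem_map] at hxT
          obtain ⟨q', _, he⟩ := hxT
          exact Sum.inr_ne_inl he
      have hIF := hFind.indepFun_finset J Ttr hdisjJT hFmeas
      set MS : Set (J → ℝ) := {v | ∑ i : J, cf i * (v i - pp i) ≤ -(t + V)} with hMS
      have hMSmeas : MeasurableSet MS := by
        rw [hMS]
        apply measurableSet_le _ measurable_const
        apply Finset.measurable_sum
        intro i _
        exact ((measurable_pi_apply i).sub_const _).const_mul _
      set MT : Set (Ttr → ℝ) := {v | ∀ i : Ttr, v i = F i ω₀} with hMT
      have hMTmeas : MeasurableSet MT := by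
        rw [hMT]
        have hMT2 : {v : Ttr → ℝ | ∀ i : Ttr, v i = F i ω₀}
            = ⋂ i : Ttr, {v : Ttr → ℝ | v i = F i ω₀} := by
          ext v; simp only [Set.mem_setOf_eq, Set.mem_iInter]
        rw [hMT2]
        exact MeasurableSet.iInter
          (fun i => (measurable_pi_apply i) (measurableSet_singleton _))
      have hev1pre : ev1 = (fun a (i : J) => F i a) ⁻¹' MS := by
        ext ω
        show (∑ x ∈ J, cf x * (F x ω - pp x) ≤ -(t + V)) ↔
          (∑ i : J, cf i * (F i ω - pp i) ≤ -(t + V))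
        rw [Finset.sum_coe_sort J (fun x => cf x * (F x ω - pp x))]
      have hfibpre : fib b = (fun a (i : Ttr) => F i a) ⁻¹' MT := by
        ext ω
        show (∀ q : Fin n₁ × Fin n₂, _ ∧ _) ↔ (∀ i : Ttr, F i ω = F i ω₀)
        rw [Subtype.forall]
        constructor
        · intro hω x hx
          rw [hTtr, Finset.mem_union] at hx
          rcases hx with hx | hx
          · rw [Finset.mem_map] at hx
            obtain ⟨q, hq, rfl⟩ := hx
            rw [hQtr, Finset.mem_filter] at hq
            exact hAent ω hω q.1 q.2 hq.2
          · rw [Finset.mem_map] at hx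
            obtain ⟨q, _, rfl⟩ := hx
            exact hGent ω hω q.1 q.2
        · intro h q
          have hGq : G ω q.1 q.2 = G ω₀ q.1 q.2 :=
            h (emb2 q) (by
              rw [hTtr, Finset.mem_union]
              exact Or.inr (Finset.mem_map_of_mem _ (Finset.mem_univ q)))
          constructor
          · rw [hGq]; exact (hω₀ q).1
          · by_cases hg : G ω₀ q.1 q.2 = 1
            · have hAq : A ω q.1 q.2 = A ω₀ q.1 q.2 :=
                h (emb1 q) (by
                  rw [hTtr, Finset.mem_union]
                  exact Or.inl (Finset.mem_map_of_mem _
                    (by rw [hQtr, Finset.mem_filter]; exact ⟨Finset.mem_univ q, hg⟩)))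
              rw [hGq, hAq]; exact (hω₀ q).2
            · have h0 : G ω₀ q.1 q.2 = 0 := (hG01 ω₀ q.1 q.2).resolve_right hg
              have h2 := (hω₀ q).2
              rw [h0, mul_zero] at h2
              rw [hGq, h0, mul_zero]
              exact h2
      have hprodm : ℙ (ev1 ∩ fib b) = ℙ ev1 * ℙ (fib b) := by
        rw [hev1pre, hfibpre]
        exact hIF.measure_inter_preimage_eq_mul MS MT hMSmeas hMTmeas
      calc ℙ (E ∩ fib b) ≤ ℙ (ev1 ∩ fib b) := measure_mono hsubset
        _ = ℙ ev1 * ℙ (fib b) := hprodm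
        _ ≤ ENNReal.ofReal (Real.exp (-(t/2))) * ℙ (fib b) :=
            mul_le_mul_left hev1b _
  -- assemble
  have hsum1 : ∑ b : (Fin n₁ × Fin n₂) → Bool × Bool, ℙ (fib b) = 1 := by
    rw [← measure_biUnion_finset hpd (fun b _ => hfibmeas b)]
    have hU : ⋃ b ∈ (Finset.univ : Finset ((Fin n₁ × Fin n₂) → Bool × Bool)), fib b
        = Set.univ := by
      apply Set.eq_univ_of_forall
      intro ω
      obtain ⟨b, hb⟩ := hcover ω
      exact Set.mem_biUnion (Finset.mem_univ b) hb
    rw [hU, measure_univ]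
  have hPE : ℙ E ≤ ENNReal.ofReal (Real.exp (-(t/2))) := by
    calc ℙ E ≤ ℙ (⋃ b ∈ (Finset.univ : Finset ((Fin n₁ × Fin n₂) → Bool × Bool)),
          (E ∩ fib b)) := by
          apply measure_mono
          intro ω hω
          obtain ⟨b, hb⟩ := hcover ω
          exact Set.mem_biUnion (Finset.mem_univ b) ⟨hω, hb⟩
      _ ≤ ∑ b : (Fin n₁ × Fin n₂) → Bool × Bool, ℙ (E ∩ fib b) :=
          measure_biUnion_finset_le _ _
      _ ≤ ∑ b : (Fin n₁ × Fin n₂) → Bool × Bool,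
            ENNReal.ofReal (Real.exp (-(t/2))) * ℙ (fib b) :=
          Finset.sum_le_sum (fun b _ => hkey b)
      _ = ENNReal.ofReal (Real.exp (-(t/2))) *
            ∑ b : (Fin n₁ × Fin n₂) → Bool × Bool, ℙ (fib b) := by rw [← Finset.mul_sum]
      _ = ENNReal.ofReal (Real.exp (-(t/2))) := by rw [hsum1, mul_one]
  refine le_trans hPE (ENNReal.ofReal_le_ofReal ?_)
  have hcast : ((max n₁ n₂ : ℕ) : ℝ) = max (n₁:ℝ) (n₂:ℝ) := by
    simp [Nat.cast_max]
  set m : ℕ := K₁ * K₂ * K₁' * K₂' with hm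
  have hK₂'m : K₂' ≤ m := by
    rw [hm]
    have hpos : 0 < K₁ * K₂ * K₁' := by positivity
    exact Nat.le_mul_of_pos_left K₂' hpos
  have hm3 : 3 ≤ m := le_trans (by omega : 3 ≤ K₂') hK₂'m
  have hxpos : (0:ℝ) < max (n₁:ℝ) (n₂:ℝ) := by linarith
  have hexp : Real.exp (-(t/2)) = ((max (n₁:ℝ) (n₂:ℝ)) ^ m)⁻¹ := by
    rw [htdef]
    have he : -(2 * (K₁:ℝ) * (K₂:ℝ) * (K₁':ℝ) * (K₂':ℝ)
          * Real.log (max (n₁:ℝ) (n₂:ℝ)) / 2)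
        = -((m:ℝ) * Real.log (max (n₁:ℝ) (n₂:ℝ))) := by
      rw [hm]; push_cast; ring
    rw [he, Real.exp_neg, Real.exp_nat_mul, Real.exp_log hxpos]
  rw [hexp, hcast]
  have hx1 : (1:ℝ) ≤ max (n₁:ℝ) (n₂:ℝ) := by linarith
  have hmono : (max (n₁:ℝ) (n₂:ℝ))^3 ≤ (max (n₁:ℝ) (n₂:ℝ))^m :=
    pow_le_pow_right₀ hx1 hm3
  have hK : (1:ℝ) ≤ 2 * (K₁:ℝ)^2 * (K₂:ℝ) := by
    have h1 : (2:ℝ) ≤ (K₁:ℝ) := by exact_mod_cast hK₁2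
    have h2 : (1:ℝ) ≤ (K₂:ℝ) := by exact_mod_cast hK₂pos
    nlinarith
  calc ((max (n₁:ℝ) (n₂:ℝ))^m)⁻¹ ≤ ((max (n₁:ℝ) (n₂:ℝ))^3)⁻¹ := by
        apply inv_anti₀ (by positivity) hmono
    _ = 1 / (max (n₁:ℝ) (n₂:ℝ))^3 := by rw [one_div]
    _ ≤ 2 * (K₁:ℝ)^2 * (K₂:ℝ) / (max (n₁:ℝ) (n₂:ℝ))^3 := by gcongr

end BCV
end
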